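/- arXiv:2603.14594 — 5 statements merged into one kernel-verified Lean document; each statement's English description precedes it below -/
import Mathlib

section
/- Suppose V is conditionally independent of (Y, U) given S, and fix an instantiation u of U with the property that P(v | s) > 0 is possible (i.e., all conditional probabilities well-defined on support of S). If for some class y_j ≠ y_i, Δ^{ij}_s(u) = P(y_i, u, s) − P(y_j, u, s) ≤ 0 for every s in the support of S, then for every instantiation v of V, P(y_i, u, v) ≤ P(y_j, u, v); hence the instance (u, v) is never classified to y_i under strict-argmax classification. Conversely, if Δ^{ij}_s(u) > 0 for every s in the support of S and every j ≠ i, then for every v with P(v | s) > 0 for at least one s in the support, P(y_i, u, v) > P(y_j, u, v) for all j ≠ i, and (u, v) is classified to y_i. -/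
/-!
Conditional independence of `V` from `(Y, U)` given `S` factors the joint law as
`P(y, u, s, v) = P(y, u, s) · P(v | s)`, so `P(y, u, v) = ∑ₛ P(y, u, s) · P(v | s)`.
Comparing two classes `y_i`, `y_j` thus compares two sums with the same nonnegative weights
`P(v | s)`, which vanish off the support of `S`: a sign of `Δ^{ij}_s(u)` holding on the support
passes to the sums, and strictly so as soon as one weight `P(v | s)` is positive.
-/

open Finset

section WeightedSums

variable {ι R : Type*} [Fintype ι] [CommRing R] [LinearOrder R] [IsStrictOrderedRing R]
  {a b w : ι → R}

theorem sum_mul_le_sum_mul_of_le_of_ne_zero (hw : ∀ i, 0 ≤ w i)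
    (hab : ∀ i, w i ≠ 0 → a i ≤ b i) : ∑ i, a i * w i ≤ ∑ i, b i * w i := by
  refine sum_le_sum fun i _ => ?_
  rcases eq_or_ne (w i) 0 with h | h
  · simp [h]
  · exact mul_le_mul_of_nonneg_right (hab i h) (hw i)

theorem sum_mul_lt_sum_mul_of_le_of_ne_zero (hw : ∀ i, 0 ≤ w i)
    (hab : ∀ i, w i ≠ 0 → a i ≤ b i) (hlt : ∃ i, 0 < w i ∧ a i < b i) :
    ∑ i, a i * w i < ∑ i, b i * w i := by
  obtain ⟨i₀, hw₀, hlt₀⟩ := hlt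
  refine sum_lt_sum (fun i _ => ?_) ⟨i₀, mem_univ _, mul_lt_mul_of_pos_right hlt₀ hw₀⟩
  rcases eq_or_ne (w i) 0 with h | h
  · simp [h]
  · exact mul_le_mul_of_nonneg_right (hab i h) (hw i)

end WeightedSums

/-- Under `0 < ∑ a → a v / ∑ a = c`, the junk value `x / 0 = 0` makes no difference:
if `∑ a = 0` then `a v = 0` by nonnegativity. -/
theorem eq_sum_mul_of_div_sum_eq {V : Type*} [Fintype V] {a : V → ℝ} (ha : ∀ v, 0 ≤ a v)
    {v : V} {c : ℝ} (h : 0 < ∑ v', a v' → a v / ∑ v', a v' = c) : a v = (∑ v', a v') * c := by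
  rcases (sum_nonneg fun v' _ => ha v').lt_or_eq with hpos | hzero
  · rw [← h hpos, mul_div_cancel₀ _ hpos.ne']
  · rw [← hzero, zero_mul]
    exact (sum_eq_zero_iff_of_nonneg fun v' _ => ha v').mp hzero.symm v (mem_univ v)

section CondIndep

variable {k : ℕ} {U S V : Type} [Fintype U] [Fintype V]
  (P : Fin k → U → S → V → ℝ)

def probS (s : S) : ℝ := ∑ y, ∑ u, ∑ v, P y u s v

noncomputable def condProbV (s : S) (v : V) : ℝ := (∑ y, ∑ u, P y u s v) / probS P s

variable {P}

theorem probS_nonneg (hnonneg : ∀ y u s v, 0 ≤ P y u s v) (s : S) : 0 ≤ probS P s :=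
  sum_nonneg fun _ _ => sum_nonneg fun _ _ => sum_nonneg fun _ _ => hnonneg _ _ _ _

theorem condProbV_nonneg (hnonneg : ∀ y u s v, 0 ≤ P y u s v) (s : S) (v : V) :
    0 ≤ condProbV P s v :=
  div_nonneg (sum_nonneg fun _ _ => sum_nonneg fun _ _ => hnonneg _ _ _ _)
    (probS_nonneg hnonneg s)

theorem probS_pos_of_condProbV_ne_zero (hnonneg : ∀ y u s v, 0 ≤ P y u s v) {s : S} {v : V}
    (h : condProbV P s v ≠ 0) : 0 < probS P s := by
  refine (probS_nonneg hnonneg s).lt_of_ne fun hzero => h ?_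
  rw [condProbV, ← hzero, div_zero]

theorem sum_joint_eq_sum_mul_condProbV [Fintype S] (hnonneg : ∀ y u s v, 0 ≤ P y u s v)
    (hCI : ∀ y u s v, 0 < ∑ v', P y u s v' →
      P y u s v / ∑ v', P y u s v' = condProbV P s v) (y : Fin k) (u : U) (v : V) :
    ∑ s, P y u s v = ∑ s, (∑ v', P y u s v') * condProbV P s v :=
  sum_congr rfl fun s _ => eq_sum_mul_of_div_sum_eq (hnonneg y u s) (hCI y u s v)

end CondIndep

open Finset in
theorem stmt3_general {k : ℕ} {U S V : Type} [Fintype U] [Fintype S] [Fintype V]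
    (P : Fin k → U → S → V → ℝ)
    (hnonneg : ∀ y u s v, 0 ≤ P y u s v)
    -- conditional independence: P(v | y,u,s) = P(v | s) whenever P(y,u,s) > 0
    (hCI : ∀ y u s v, 0 < (∑ v', P y u s v') →
      P y u s v / (∑ v', P y u s v')
        = (∑ y', ∑ u', P y' u' s v) / (∑ y', ∑ u', ∑ v', P y' u' s v'))
    (i : Fin k) (u : U) :
    -- (a) non-positive Δ for some j ≠ i ⇒ u is negative for class y_i
    (∀ j : Fin k, j ≠ i →
      (∀ s, 0 < (∑ y', ∑ u', ∑ v', P y' u' s v') →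
          (∑ v', P i u s v') - (∑ v', P j u s v') ≤ 0) →
      ∀ v, (∑ s, P i u s v) ≤ (∑ s, P j u s v)
        ∧ ¬ (∀ j' : Fin k, j' ≠ i → (∑ s, P j' u s v) < (∑ s, P i u s v)))
    ∧
    -- (b) positive Δ for every j ≠ i ⇒ u is positive for class y_i
    ((∀ j : Fin k, j ≠ i →
        ∀ s, 0 < (∑ y', ∑ u', ∑ v', P y' u' s v') →
          0 < (∑ v', P i u s v') - (∑ v', P j u s v')) →
      ∀ v, (∃ s, 0 < (∑ y', ∑ u', ∑ v', P y' u' s v')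
              ∧ 0 < (∑ y', ∑ u', P y' u' s v) / (∑ y', ∑ u', ∑ v', P y' u' s v')) →
        ∀ j : Fin k, j ≠ i → (∑ s, P j u s v) < (∑ s, P i u s v)) := by
  have hmix := sum_joint_eq_sum_mul_condProbV hnonneg hCI
  have hsupp : ∀ {s v}, condProbV P s v ≠ 0 → 0 < probS P s :=
    probS_pos_of_condProbV_ne_zero hnonneg
  constructor
  · intro j hj hΔ v
    have hle : ∑ s, P i u s v ≤ ∑ s, P j u s v := by
      rw [hmix, hmix]
      exact sum_mul_le_sum_mul_of_le_of_ne_zero (condProbV_nonneg hnonneg · v)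
        fun s hs => sub_nonpos.mp (hΔ s (hsupp hs))
    exact ⟨hle, fun hwin => (hwin j hj).not_ge hle⟩
  · rintro hΔ v ⟨s₀, hs₀, hcond₀⟩ j hj
    rw [hmix, hmix]
    exact sum_mul_lt_sum_mul_of_le_of_ne_zero (condProbV_nonneg hnonneg · v)
      (fun s hs => (sub_pos.mp (hΔ j hj s (hsupp hs))).le)
      ⟨s₀, hcond₀, sub_pos.mp (hΔ j hj s₀ hs₀)⟩

open Finset in
/-- with `V ⊥ (Y,U) | S` and `Δ^{ij}_s(u) = P(y_i,u,s) − P(y_j,u,s)`: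
(a) if `Δ^{ij}_s(u) ≤ 0` for all `s` in the support of `S` and some `j ≠ i`,
then `P(y_i,u,v) ≤ P(y_j,u,v)` for every `v`, hence `(u,v)` is never classified
to `y_i` under strict-argmax classification;
(b) conversely, if `Δ^{ij}_s(u) > 0` for every `j ≠ i` and every `s` in the support,
then every `v` with `P(v|s) > 0` for some `s` in the support satisfies
`P(y_j,u,v) < P(y_i,u,v)` for all `j ≠ i`, i.e. `(u,v)` is classified to `y_i`. -/
theorem stmt3 {k : ℕ} {U S V : Type} [Fintype U] [Fintype S] [Fintype V]
    (P : Fin k → U → S → V → ℝ)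
    (hnonneg : ∀ y u s v, 0 ≤ P y u s v)
    (hsum : ∑ y, ∑ u, ∑ s, ∑ v, P y u s v = 1)
    -- conditional independence: P(v | y,u,s) = P(v | s) whenever P(y,u,s) > 0
    (hCI : ∀ y u s v, 0 < (∑ v', P y u s v') →
      P y u s v / (∑ v', P y u s v')
        = (∑ y', ∑ u', P y' u' s v) / (∑ y', ∑ u', ∑ v', P y' u' s v'))
    (i : Fin k) (u : U) :
    -- (a) non-positive Δ for some j ≠ i ⇒ u is negative for class y_i
    (∀ j : Fin k, j ≠ i →
      (∀ s, 0 < (∑ y', ∑ u', ∑ v', P y' u' s v') →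
          (∑ v', P i u s v') - (∑ v', P j u s v') ≤ 0) →
      ∀ v, (∑ s, P i u s v) ≤ (∑ s, P j u s v)
        ∧ ¬ (∀ j' : Fin k, j' ≠ i → (∑ s, P j' u s v) < (∑ s, P i u s v)))
    ∧
    -- (b) positive Δ for every j ≠ i ⇒ u is positive for class y_i
    ((∀ j : Fin k, j ≠ i →
        ∀ s, 0 < (∑ y', ∑ u', ∑ v', P y' u' s v') →
          0 < (∑ v', P i u s v') - (∑ v', P j u s v')) →
      ∀ v, (∃ s, 0 < (∑ y', ∑ u', ∑ v', P y' u' s v')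
              ∧ 0 < (∑ y', ∑ u', P y' u' s v) / (∑ y', ∑ u', ∑ v', P y' u' s v')) →
        ∀ j : Fin k, j ≠ i → (∑ s, P j u s v) < (∑ s, P i u s v)) :=
  stmt3_general P hnonneg hCI i u
end

section
/- Let T be a tree of clusters satisfying the running intersection property, and let e be an edge of T with separator S. Let Z and Z' be the unions of clusters on the two sides of e. Then Z ∩ Z' = S. -/
open SimpleGraph Walk

/-- In a tree, if `p : a → v` is a path passing through `u`, then the endpoint `v`
is not in the support of `p.takeUntil u` unless `u = v`. -/
private lemma end_not_mem_takeUntil {N : Type} [DecidableEq N] {G : SimpleGraph N} {a u v : N}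
    {p : G.Walk a v} (hp : p.IsPath) (hu : u ∈ p.support) (hne : u ≠ v) :
    v ∉ (p.takeUntil u hu).support := by
  have hnodup := hp.support_nodup
  rw [← take_spec p hu, Walk.support_append, List.nodup_append] at hnodup
  intro hv
  have hvd : v ∈ (p.dropUntil u hu).support.tail := by
    have hvs : v ∈ (p.dropUntil u hu).support := Walk.end_mem_support _
    rw [Walk.support_eq_cons] at hvs
    rcases List.mem_cons.mp hvs with h | h
    · exact absurd h.symm hne
    · exact h
  exact hnodup.2.2 v hv v hvd rfl

/-- in a cluster tree with the running intersection property, for an edge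
`e = (n₁, n₂)` with separator `S = cluster n₁ ∩ cluster n₂`, if `Z` and `Z'` are the
unions of the clusters on the two sides of `e`, then `Z ∩ Z' = S`. The side of `n₁`
consists of the nodes `c` such that every path from `c` to `n₂` passes through `n₁`,
and symmetrically for `n₂`. -/
theorem stmt9 {N Var : Type} (G : SimpleGraph N) (hT : G.IsTree)
    (cluster : N → Set Var)
    -- running intersection property
    (RIP : ∀ (a b : N) (x : Var), x ∈ cluster a → x ∈ cluster b →
      ∀ p : G.Walk a b, p.IsPath → ∀ c ∈ p.support, x ∈ cluster c)
    (n₁ n₂ : N) (he : G.Adj n₁ n₂) :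
    (⋃ c ∈ {c : N | ∀ p : G.Walk c n₂, p.IsPath → n₁ ∈ p.support}, cluster c)
      ∩ (⋃ c ∈ {c : N | ∀ p : G.Walk c n₁, p.IsPath → n₂ ∈ p.support}, cluster c)
      = cluster n₁ ∩ cluster n₂ := by
  haveI := Classical.decEq N
  have hne : n₁ ≠ n₂ := he.ne
  ext x
  simp only [Set.mem_inter_iff, Set.mem_iUnion, Set.mem_setOf_eq, exists_prop]
  constructor
  · rintro ⟨⟨a, ha, hxa⟩, ⟨b, hb, hxb⟩⟩
    -- the unique path from a to n₂ passes through n₁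
    obtain ⟨pa, hpa, -⟩ := hT.existsUnique_path a n₂
    have hn1a : n₁ ∈ pa.support := ha pa hpa
    set qa := pa.takeUntil n₁ hn1a with hqa_def
    have hqa : qa.IsPath := hpa.takeUntil hn1a
    have hqa_n2 : n₂ ∉ qa.support := end_not_mem_takeUntil hpa hn1a hne
    -- the unique path from b to n₁ passes through n₂
    obtain ⟨pb, hpb, -⟩ := hT.existsUnique_path b n₁
    have hn2b : n₂ ∈ pb.support := hb pb hpb
    set qb := pb.takeUntil n₂ hn2b with hqb_def
    have hqb : qb.IsPath := hpb.takeUntil hn2b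
    have hqb_n1 : n₁ ∉ qb.support := end_not_mem_takeUntil hpb hn2b hne.symm
    -- supports of qa and qb are disjoint
    have hdisj : ∀ c, c ∈ qa.support → c ∈ qb.support → False := by
      intro c hca hcb
      -- path from c to n₁ avoiding n₂
      have hc1 : (qa.dropUntil c hca).IsPath := hqa.dropUntil hca
      have hc1n2 : n₂ ∉ (qa.dropUntil c hca).support := fun h =>
        hqa_n2 (Walk.support_dropUntil_subset _ hca h)
      -- path from c to n₁ through n₂
      have hc2n1 : n₁ ∉ (qb.dropUntil c hcb).support := fun h =>
        hqb_n1 (Walk.support_dropUntil_subset _ hcb h)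
      have hc2 : ((qb.dropUntil c hcb).concat he.symm).IsPath := by
        rw [Walk.isPath_def, Walk.support_concat]
        simp only [List.concat_eq_append, List.nodup_append, List.nodup_cons]
        refine ⟨(hqb.dropUntil hcb).support_nodup, by simp, ?_⟩
        intro u hu u' hu' huu'
        simp only [List.mem_singleton] at hu'
        rw [huu', hu'] at hu
        exact hc2n1 hu
      have := (hT.existsUnique_path c n₁).unique hc1 hc2
      apply hc1n2
      rw [this, Walk.support_concat, List.mem_append]
      exact Or.inl (Walk.end_mem_support _)
    -- build the path a → n₁ → n₂ → b
    have hr : ((qb.concat he.symm).reverse).IsPath := by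
      apply Walk.IsPath.reverse
      rw [Walk.isPath_def, Walk.support_concat]
      simp only [List.concat_eq_append, List.nodup_append, List.nodup_cons]
      refine ⟨hqb.support_nodup, by simp, ?_⟩
      intro u hu u' hu' huu'
      simp only [List.mem_singleton] at hu'
      rw [huu', hu'] at hu
      exact hqb_n1 hu
    have hr_support : ((qb.concat he.symm).reverse).support
        = n₁ :: qb.support.reverse := by
      rw [Walk.support_reverse, Walk.support_concat]
      simp
    set w := qa.append ((qb.concat he.symm).reverse) with hw_def
    have hw : w.IsPath := by
      rw [Walk.isPath_def, Walk.support_append, List.nodup_append]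
      refine ⟨hqa.support_nodup, ?_, ?_⟩
      · rw [hr_support]
        simpa using hqb.support_nodup
      · intro u hu v hv huv
        rw [hr_support] at hv
        simp only [List.tail_cons, List.mem_reverse] at hv
        exact hdisj u hu (huv ▸ hv)
    have hn1w : n₁ ∈ w.support := by
      rw [hw_def, Walk.mem_support_append_iff]
      exact Or.inl (Walk.end_mem_support _)
    have hn2w : n₂ ∈ w.support := by
      rw [hw_def, Walk.mem_support_append_iff]
      right
      rw [hr_support]
      simp only [List.mem_cons, List.mem_reverse]
      exact Or.inr (Walk.end_mem_support qb)
    exact ⟨RIP a b x hxa hxb w hw n₁ hn1w, RIP a b x hxa hxb w hw n₂ hn2w⟩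
  · rintro ⟨hx1, hx2⟩
    exact ⟨⟨n₁, fun p _ => Walk.start_mem_support p, hx1⟩,
           ⟨n₂, fun p _ => Walk.start_mem_support p, hx2⟩⟩
end

section
/- Let Γ = {v^1 ∧ α^1, ..., v^m ∧ α^m} where each v^k is a distinct full instantiation (term) over variables V_l and each α^k is an AND-decomposable NNF over variables V_r, with V_l ∩ V_r = ∅. Then the disjunction ∨_k (v^k ∧ α^k) is an AND-decomposable NNF, and an assignment (v_l, v_r) satisfies it iff v_l = v^k for some k and v_r satisfies α^k. -/
/-- NNF circuits over discrete variables, with literals of the form `variable = value`. -/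
inductive DNNF (V : Type) (D : V → Type) : Type
  | lit (v : V) (d : D v)
  | and (a b : DNNF V D)
  | or (a b : DNNF V D)

namespace DNNF

variable {V : Type} {D : V → Type}

/-- Semantics w.r.t. a joint assignment `f` of values to all variables. -/
def eval (f : ∀ v, D v) : DNNF V D → Prop
  | lit v d => f v = d
  | and a b => eval f a ∧ eval f b
  | or a b => eval f a ∨ eval f b

/-- The set of variables mentioned by a circuit. -/
def vars : DNNF V D → Set V
  | lit v _ => {v}
  | and a b => vars a ∪ vars b
  | or a b => vars a ∪ vars b

/-- AND-decomposability: conjuncts of each AND node mention disjoint variable sets. -/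
def andDec : DNNF V D → Prop
  | lit _ _ => True
  | and a b => Disjoint (vars a) (vars b) ∧ andDec a ∧ andDec b
  | or a b => andDec a ∧ andDec b

/-- Disjunction of a nonempty collection of circuits. -/
def bigOr (x : DNNF V D) (l : List (DNNF V D)) : DNNF V D := l.foldl .or x

end DNNF

namespace DNNF

variable {V : Type} {D : V → Type}

theorem andDec_bigOr (x : DNNF V D) (l : List (DNNF V D)) :
    (bigOr x l).andDec ↔ x.andDec ∧ ∀ y ∈ l, y.andDec := by
  induction l generalizing x with
  | nil => simp [bigOr]
  | cons a l ih =>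
    change (bigOr (x.or a) l).andDec ↔ _
    simp only [ih, andDec, List.forall_mem_cons, and_assoc]

theorem eval_bigOr (f : ∀ v, D v) (x : DNNF V D) (l : List (DNNF V D)) :
    (bigOr x l).eval f ↔ x.eval f ∨ ∃ y ∈ l, y.eval f := by
  induction l generalizing x with
  | nil => simp [bigOr]
  | cons a l ih =>
    change (bigOr (x.or a) l).eval f ↔ _
    simp only [ih, eval, List.exists_mem_cons_iff, or_assoc]

theorem andDec_bigOr_ofFn {m : ℕ} (g : Fin (m + 1) → DNNF V D) :
    (bigOr (g 0) (List.ofFn fun k : Fin m => g k.succ)).andDec ↔ ∀ k, (g k).andDec := by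
  simp only [andDec_bigOr, List.forall_mem_ofFn_iff, Fin.forall_fin_succ]

theorem eval_bigOr_ofFn (f : ∀ v, D v) {m : ℕ} (g : Fin (m + 1) → DNNF V D) :
    (bigOr (g 0) (List.ofFn fun k : Fin m => g k.succ)).eval f ↔ ∃ k, (g k).eval f := by
  simp only [eval_bigOr, List.mem_ofFn', Set.exists_range_iff, Fin.exists_fin_succ]

end DNNF

theorem Set.disjoint_of_forall_isLeft_of_forall_isRight {α β : Type*} {s t : Set (α ⊕ β)}
    (hs : ∀ x ∈ s, x.isLeft) (ht : ∀ x ∈ t, x.isRight) : Disjoint s t :=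
  Set.disjoint_left.mpr fun x hxs hxt => by
    cases x <;> simp_all

theorem stmt12_general {L R : Type} {D : L ⊕ R → Type} (m : ℕ)
    (v : Fin (m + 1) → ∀ l : L, D (Sum.inl l))
    (t α : Fin (m + 1) → DNNF (L ⊕ R) D)
    -- each `t k` is a term over `V_l` whose unique model on `V_l` is `v k`
    (htvars : ∀ k, ∀ x ∈ (t k).vars, x.isLeft)
    (htsem : ∀ k (f : ∀ x, D x), (t k).eval f ↔ ∀ l : L, f (Sum.inl l) = v k l)
    (htdec : ∀ k, (t k).andDec)
    -- each `α k` is an AND-decomposable NNF over `V_r`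
    (havars : ∀ k, ∀ x ∈ (α k).vars, x.isRight)
    (hadec : ∀ k, (α k).andDec)
    (φ : DNNF (L ⊕ R) D)
    (hφ : φ = DNNF.bigOr ((t 0).and (α 0))
        (List.ofFn fun k : Fin m => (t k.succ).and (α k.succ))) :
    φ.andDec ∧
      ∀ f : ∀ x, D x,
        φ.eval f ↔ ∃ k, (∀ l : L, f (Sum.inl l) = v k l) ∧ (α k).eval f := by
  subst hφ
  constructor
  · refine (DNNF.andDec_bigOr_ofFn fun k => (t k).and (α k)).mpr fun k => ?_
    exact ⟨Set.disjoint_of_forall_isLeft_of_forall_isRight (htvars k) (havars k), htdec k, hadec k⟩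
  · intro f
    simp only [DNNF.eval_bigOr_ofFn f fun k => (t k).and (α k), DNNF.eval, htsem]

/-- let `Γ = {v¹ ∧ α¹, …}` where each `vᵏ` is a distinct full
instantiation (represented by a term `t k`) over the left variables `V_l = L` and each
`αᵏ` is an AND-decomposable NNF over the right variables `V_r = R` (disjoint from `V_l`,
realized as the two summands of `L ⊕ R`). Then the disjunction `∨ₖ (vᵏ ∧ αᵏ)` is an
AND-decomposable NNF, and an assignment `f = (v_l, v_r)` satisfies it iff `v_l = vᵏ`
for some `k` and `v_r` satisfies `αᵏ`. -/
theorem stmt12 {L R : Type} {D : L ⊕ R → Type} (m : ℕ)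
    (v : Fin (m + 1) → ∀ l : L, D (Sum.inl l))
    (hdistinct : Function.Injective v)
    (t α : Fin (m + 1) → DNNF (L ⊕ R) D)
    -- each `t k` is a term over `V_l` whose unique model on `V_l` is `v k`
    (htvars : ∀ k, ∀ x ∈ (t k).vars, x.isLeft)
    (htsem : ∀ k (f : ∀ x, D x), (t k).eval f ↔ ∀ l : L, f (Sum.inl l) = v k l)
    (htdec : ∀ k, (t k).andDec)
    -- each `α k` is an AND-decomposable NNF over `V_r`
    (havars : ∀ k, ∀ x ∈ (α k).vars, x.isRight)
    (hadec : ∀ k, (α k).andDec)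
    (φ : DNNF (L ⊕ R) D)
    (hφ : φ = DNNF.bigOr ((t 0).and (α 0))
        (List.ofFn fun k : Fin m => (t k.succ).and (α k.succ))) :
    φ.andDec ∧
      ∀ f : ∀ x, D x,
        φ.eval f ↔ ∃ k, (∀ l : L, f (Sum.inl l) = v k l) ∧ (α k).eval f :=
  stmt12_general m v t α htvars htsem htdec havars hadec φ hφ
end

section
/- Suppose V is conditionally independent of (Y, U) given S under P. For instantiations u of U, v^l of a subset V_l ⊆ V, and s' of a subset S' of variables, the 'message' factor M'(y, s') = Σ_{s} P(y, u, s) · P(v^l, s' | s) equals P(y, u, v^l, s') whenever V_l and S' are conditionally independent of (Y, U) given S. In particular, the factor update on line 13 of the compilation algorithm correctly maintains the invariant M = P(Y, u, S). -/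
/-! By conditional independence each summand `P(y,u,s) · P(vl,s' | s)` is
`P(y,u,s) · P(vl,s' | y,u,s) = P(y,u,s,vl,s')`; where `P(y,u,s) = 0` both sides vanish by
nonnegativity, and the states `s` with `P(s) = 0` carry no mass of `P(y,u,s,vl,s')` either. -/

open Finset

theorem single_le_sum_sum {α β M : Type*} [Fintype α] [Fintype β] [AddCommMonoid M]
    [PartialOrder M] [IsOrderedAddMonoid M] {f : α → β → M} (hf : ∀ a b, 0 ≤ f a b)
    (a : α) (b : β) : f a b ≤ ∑ a', ∑ b', f a' b' :=
  calc f a b ≤ ∑ b', f a b' := single_le_sum (fun b' _ => hf a b') (mem_univ b)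
    _ ≤ ∑ a', ∑ b', f a' b' :=
      single_le_sum (f := fun a' => ∑ b', f a' b') (fun a' _ => sum_nonneg fun b' _ => hf a' b')
        (mem_univ a)

/-- `P(a) · P(b | a) = P(a, b)`, also when `P(a) = 0` and the conditional is undefined. -/
theorem mul_eq_of_pos_imp_div_eq {a p q : ℝ} (hp : 0 ≤ p) (hpa : p ≤ a)
    (h : 0 < a → p / a = q) : a * q = p := by
  rcases (hp.trans hpa).lt_or_eq with ha | ha
  · rw [← h ha, mul_div_cancel₀ _ ha.ne']
  · rw [← ha, zero_mul]
    exact (hpa.trans ha.ge).antisymm hp |>.symm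

open Finset in
theorem stmt13_general {Y U S Vl S' : Type} [Fintype Y] [Fintype U] [Fintype S]
    [Fintype Vl] [Fintype S']
    (P : Y → U → S → Vl → S' → ℝ)
    (hnonneg : ∀ y u s vl s', 0 ≤ P y u s vl s')
    -- conditional independence: P(vl, s' | y, u, s) = P(vl, s' | s) when P(y,u,s) > 0
    (hCI : ∀ y u s vl s', 0 < (∑ vl', ∑ s'', P y u s vl' s'') →
      P y u s vl s' / (∑ vl', ∑ s'', P y u s vl' s'')
        = (∑ y', ∑ u', P y' u' s vl s') / (∑ y', ∑ u', ∑ vl', ∑ s'', P y' u' s vl' s''))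
    (u : U) (vl : Vl) :
    ∀ (y : Y) (s' : S'),
      (∑ s ∈ Finset.univ.filter
          (fun s => 0 < ∑ y', ∑ u', ∑ vl', ∑ s'', P y' u' s vl' s''),
        (∑ vl', ∑ s'', P y u s vl' s'')
          * ((∑ y', ∑ u', P y' u' s vl s')
              / (∑ y', ∑ u', ∑ vl', ∑ s'', P y' u' s vl' s'')))
      = ∑ s, P y u s vl s' := by
  intro y s'
  have hP_le_joint (s : S) : P y u s vl s' ≤ ∑ vl', ∑ s'', P y u s vl' s'' :=
    single_le_sum_sum (hnonneg y u s) vl s'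
  have hjoint_le_marginal (s : S) :
      ∑ vl', ∑ s'', P y u s vl' s'' ≤ ∑ y', ∑ u', ∑ vl', ∑ s'', P y' u' s vl' s'' :=
    single_le_sum_sum (f := fun y' u' => ∑ vl', ∑ s'', P y' u' s vl' s'')
      (fun y' u' => sum_nonneg fun vl' _ => sum_nonneg fun s'' _ => hnonneg y' u' s vl' s'') y u
  have hsupport (s : S) (hs : P y u s vl s' ≠ 0) :
      0 < ∑ y', ∑ u', ∑ vl', ∑ s'', P y' u' s vl' s'' :=
    ((hnonneg y u s vl s').lt_of_ne' hs).trans_le ((hP_le_joint s).trans (hjoint_le_marginal s))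
  rw [← sum_filter_of_ne fun s _ => hsupport s]
  exact sum_congr rfl fun s _ =>
    mul_eq_of_pos_imp_div_eq (hnonneg y u s vl s') (hP_le_joint s) (hCI y u s vl s')

open Finset in
/-- with `(V_l, S') ⊥ (Y, U) | S`, for instantiations `u` of `U`,
`vl` of `V_l ⊆ V` and `s'` of `S'`, the message factor
`M'(y, s') = Σ_s P(y,u,s) · P(vl, s' | s)` equals `P(y, u, vl, s')`;
this is the invariant `M = P(Y, u, S)` maintained by the factor update of the
compilation algorithm. -/
theorem stmt13 {Y U S Vl S' : Type} [Fintype Y] [Fintype U] [Fintype S]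
    [Fintype Vl] [Fintype S']
    (P : Y → U → S → Vl → S' → ℝ)
    (hnonneg : ∀ y u s vl s', 0 ≤ P y u s vl s')
    (hsum : ∑ y, ∑ u, ∑ s, ∑ vl, ∑ s', P y u s vl s' = 1)
    -- conditional independence: P(vl, s' | y, u, s) = P(vl, s' | s) when P(y,u,s) > 0
    (hCI : ∀ y u s vl s', 0 < (∑ vl', ∑ s'', P y u s vl' s'') →
      P y u s vl s' / (∑ vl', ∑ s'', P y u s vl' s'')
        = (∑ y', ∑ u', P y' u' s vl s') / (∑ y', ∑ u', ∑ vl', ∑ s'', P y' u' s vl' s''))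
    (u : U) (vl : Vl) :
    ∀ (y : Y) (s' : S'),
      (∑ s ∈ Finset.univ.filter
          (fun s => 0 < ∑ y', ∑ u', ∑ vl', ∑ s'', P y' u' s vl' s''),
        (∑ vl', ∑ s'', P y u s vl' s'')
          * ((∑ y', ∑ u', P y' u' s vl s')
              / (∑ y', ∑ u', ∑ vl', ∑ s'', P y' u' s vl' s'')))
      = ∑ s, P y u s vl s' :=
  stmt13_general P hnonneg hCI u vl
end

section
/- Under the hypotheses that V is conditionally independent of (Y, U) given S, and that the classifier assigns x to y_i iff P(y_i, x) > P(y_j, x) for all j ≠ i: if the array Δ^{ij}_S(u) has both a strictly positive entry and a strictly negative entry for some j, then in general u can be neither decided positive nor negative without examining V; concretely, there exists a distribution P and conditionals P(V | S) such that some extension (u, v) is classified y_i and another extension (u, v') is not. -/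
/-!
Let `V` be an exact copy of `S` (the identity kernel), so that `(u, v)` is classified by comparing
the values `P(y, u, v)`. Putting mass `1/2` on `(y_i, u, s₁)` and `1/2` on `(y_j, u, s₂)` makes
`Δ^{ij}(u)` equal to `1/2` at `s₁` and `-1/2` at `s₂`: the extension `(u, s₁)` is classified `y_i`,
while at `(u, s₂)` the class `y_j` beats `y_i`.
-/

open Finset Matrix

lemma sum_mul_one_apply {R S : Type*} [Semiring R] [Fintype S] [DecidableEq S]
    (q : S → R) (v : S) : ∑ s, q s * (1 : Matrix S S R) s v = q v :=
  congrFun (vecMul_one q) v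

section TwoPoint

variable {α : Type*} [DecidableEq α]

noncomputable def twoPoint (a b : α) : α → ℝ := Pi.single a (1 / 2) + Pi.single b (1 / 2)

lemma twoPoint_nonneg (a b x : α) : 0 ≤ twoPoint a b x := by
  simp only [twoPoint, Pi.add_apply, Pi.single_apply]
  positivity

lemma sum_twoPoint [Fintype α] (a b : α) : ∑ x, twoPoint a b x = 1 := by
  simp only [twoPoint, Pi.add_apply, sum_add_distrib, Fintype.sum_pi_single']
  norm_num

lemma twoPoint_apply_left {a b : α} (hab : a ≠ b) : twoPoint a b a = 1 / 2 := by
  simp [twoPoint, hab]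

lemma twoPoint_apply_right {a b : α} (hab : a ≠ b) : twoPoint a b b = 1 / 2 := by
  simp [twoPoint, hab.symm]

lemma twoPoint_apply_of_ne {a b x : α} (ha : x ≠ a) (hb : x ≠ b) : twoPoint a b x = 0 := by
  simp [twoPoint, ha, hb]

end TwoPoint

open Finset in
/-- tightness of Theorem 1: with `V ⊥ (Y,U) | S` and strict-argmax
classification (`x` is assigned `y_i` iff `P(y_i, x) > P(y_j, x)` for all `j ≠ i`),
if the array `Δ^{ij}_S(u)` has both a strictly positive and a strictly negative entry
then `u` can in general be decided neither positive nor negative without examining `V`: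
there exist a marginal distribution `Q = P(Y, U, S)` (with mixed-sign `Δ^{ij}_S(u)`)
and conditionals `K = P(V | S)` (taking `V` with as many states as `S`), inducing the
joint `P(y,u,s,v) = Q(y,u,s) · K(s,v)`, such that some extension `(u, v)` is classified
`y_i` while another extension `(u, v')` is not. -/
theorem stmt16 {k : ℕ} (hk : 2 ≤ k) (i : Fin k)
    (S : Type) [Fintype S] (s₁ s₂ : S) (hs : s₁ ≠ s₂)
    (U : Type) [Fintype U] (u : U) :
    ∃ (Q : Fin k → U → S → ℝ) (K : S → S → ℝ) (j : Fin k), j ≠ i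
      -- `Q` is a probability distribution over (Y, U, S)
      ∧ (∀ y u' s, 0 ≤ Q y u' s) ∧ (∑ y, ∑ u', ∑ s, Q y u' s = 1)
      -- `K` gives a conditional distribution P(V | S)
      ∧ (∀ s v, 0 ≤ K s v) ∧ (∀ s, ∑ v, K s v = 1)
      -- the array Δ^{ij}_S(u) has a strictly positive and a strictly negative entry
      ∧ (∃ s, 0 < Q i u s - Q j u s) ∧ (∃ s, Q i u s - Q j u s < 0)
      -- some extension (u, v) is classified y_i …
      ∧ (∃ v, ∀ j' : Fin k, j' ≠ i →
          (∑ s, Q j' u s * K s v) < (∑ s, Q i u s * K s v))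
      -- … and another extension (u, v') is not
      ∧ (∃ v', ¬ ∀ j' : Fin k, j' ≠ i →
          (∑ s, Q j' u s * K s v') < (∑ s, Q i u s * K s v')) := by
  classical
  have : Nontrivial (Fin k) := Fin.nontrivial_iff_two_le.2 hk
  obtain ⟨j, hji⟩ := exists_ne i
  have hatoms : (i, u, s₁) ≠ (j, u, s₂) := by simp [hs]
  set Q : Fin k → U → S → ℝ := fun y u' s => twoPoint (i, u, s₁) (j, u, s₂) (y, u', s)
  have hQ_sum : ∑ y, ∑ u', ∑ s, Q y u' s = 1 := by
    rw [← sum_twoPoint (i, u, s₁) (j, u, s₂)]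
    simp only [Q, Fintype.sum_prod_type]
  have hQi₁ : Q i u s₁ = 1 / 2 := twoPoint_apply_left hatoms
  have hQj₂ : Q j u s₂ = 1 / 2 := twoPoint_apply_right hatoms
  have hQi₂ : Q i u s₂ = 0 := twoPoint_apply_of_ne (by simp [hs.symm]) (by simp [hji.symm])
  have hQ₁ : ∀ j' ≠ i, Q j' u s₁ = 0 := fun j' hj' =>
    twoPoint_apply_of_ne (by simp [hj']) (by simp [hs])
  have hK := (rowStochastic ℝ S).one_mem
  refine ⟨Q, (1 : Matrix S S ℝ), j, hji, fun _ _ _ => twoPoint_nonneg _ _ _, hQ_sum,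
    fun _ _ => nonneg_of_mem_rowStochastic hK, sum_row_of_mem_rowStochastic hK,
    ⟨s₁, ?_⟩, ⟨s₂, ?_⟩, ⟨s₁, ?_⟩, ⟨s₂, ?_⟩⟩
  · rw [hQi₁, hQ₁ j hji]; norm_num
  · rw [hQi₂, hQj₂]; norm_num
  · intro j' hj'
    rw [sum_mul_one_apply, sum_mul_one_apply, hQi₁, hQ₁ j' hj']; norm_num
  · intro h
    have := h j hji
    rw [sum_mul_one_apply, sum_mul_one_apply, hQi₂, hQj₂] at this
    norm_num at this
end
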